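/- arXiv:1010.2382 — 4 statements merged into one kernel-verified Lean document; each statement's English description precedes it below -/
import Mathlib

section
/- (Proposition 1, explicit multiplier form.) Let p* and p̃ be probability vectors in ℝ^m with p̃_i = 0 whenever p*_i = 0. Suppose there exist λ, ν ∈ ℝ such that for every i with p*_i > 0, ∫_ℂ h_i(y) log( h_i(y) / q_{p*}(y) ) dμ(y) = λ + ν w_i. Then the effective operating point (Ẽ, Ĩ) = (Σ_i p̃_i w_i, Σ_i p̃_i ∫ h_i log(h_i/q_{p̃}) dμ) and the target operating point (E*, I*) = (Σ_i p*_i w_i, Σ_i p*_i ∫ h_i log(h_i/q_{p*}) dμ) satisfy Ĩ = I* + ν (Ẽ − E*) − ∫_ℂ q_{p̃}(y) log( q_{p̃}(y) / q_{p*}(y) ) dμ(y). -/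
open MeasureTheory

/-- Proposition 1, explicit multiplier form: under KKT-type conditions on
the capacity achieving PMF `pstar`, the effective operating point `(Ẽ, Ĩ)` of `ptil` and
the target operating point `(E*, I*)` of `pstar` satisfy
`Ĩ = I* + ν (Ẽ − E*) − D(q_{p̃} ∥ q_{p*})`. -/
theorem operating_point_relation
    (μ : Measure ℂ) [SigmaFinite μ] (m : ℕ) (h : Fin m → ℂ → ℝ) (w : Fin m → ℝ)
    (hmeas : ∀ i, Measurable (h i))
    (hnonneg : ∀ i y, 0 ≤ h i y)
    (hdens : ∀ i, ∫ y, h i y ∂μ = 1)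
    (ptil pstar : Fin m → ℝ)
    (hptil0 : ∀ i, 0 ≤ ptil i) (hptil1 : (∑ i, ptil i) = 1)
    (hpstar0 : ∀ i, 0 ≤ pstar i) (hpstar1 : (∑ i, pstar i) = 1)
    (hsupp : ∀ i, pstar i = 0 → ptil i = 0)
    (lam nu : ℝ)
    (hkkt : ∀ i, 0 < pstar i →
      ∫ y, h i y * Real.log (h i y / (∑ j, pstar j * h j y)) ∂μ = lam + nu * w i)
    (hqstar_pos : ∀ᵐ y ∂μ, 0 < ∑ i, pstar i * h i y)
    (hqtil_pos : ∀ᵐ y ∂μ, 0 < ∑ i, ptil i * h i y)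
    (hint_til : ∀ i, 0 < ptil i ∨ 0 < pstar i →
      Integrable (fun y => h i y * Real.log (h i y / (∑ j, ptil j * h j y))) μ)
    (hint_star : ∀ i, 0 < ptil i ∨ 0 < pstar i →
      Integrable (fun y => h i y * Real.log (h i y / (∑ j, pstar j * h j y))) μ)
    (hint_kl : Integrable (fun y =>
      (∑ i, ptil i * h i y) * Real.log ((∑ i, ptil i * h i y) / (∑ i, pstar i * h i y))) μ) :
    ∑ i, ptil i * ∫ y, h i y * Real.log (h i y / (∑ j, ptil j * h j y)) ∂μ
      = (∑ i, pstar i * ∫ y, h i y * Real.log (h i y / (∑ j, pstar j * h j y)) ∂μ)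
        + nu * ((∑ i, ptil i * w i) - ∑ i, pstar i * w i)
        - ∫ y, (∑ i, ptil i * h i y) *
            Real.log ((∑ i, ptil i * h i y) / (∑ i, pstar i * h i y)) ∂μ := by
  -- a.e. pointwise identity: h i * log(qs/qt) = h i * log(h i/qt) - h i * log(h i/qs)
  have hae : ∀ᵐ y ∂μ, ∀ i : Fin m,
      h i y * Real.log ((∑ j, pstar j * h j y) / (∑ j, ptil j * h j y))
        = h i y * Real.log (h i y / (∑ j, ptil j * h j y))
          - h i y * Real.log (h i y / (∑ j, pstar j * h j y)) := by
    filter_upwards [hqstar_pos, hqtil_pos] with y hs ht i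
    rcases eq_or_lt_of_le (hnonneg i y) with h0 | hpos
    · simp [← h0]
    · rw [Real.log_div hpos.ne' ht.ne', Real.log_div hpos.ne' hs.ne',
        Real.log_div hs.ne' ht.ne']
      ring
  have hint2 : ∀ i, 0 < ptil i →
      Integrable (fun y => h i y *
        Real.log ((∑ j, pstar j * h j y) / (∑ j, ptil j * h j y))) μ := by
    intro i hi
    exact ((hint_til i (Or.inl hi)).sub (hint_star i (Or.inl hi))).congr
      (by filter_upwards [hae] with y hy using (hy i).symm)
  have hsplit : ∀ i, 0 < ptil i →
      ∫ y, h i y * Real.log (h i y / (∑ j, ptil j * h j y)) ∂μ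
        = (∫ y, h i y * Real.log (h i y / (∑ j, pstar j * h j y)) ∂μ)
          + ∫ y, h i y * Real.log ((∑ j, pstar j * h j y) / (∑ j, ptil j * h j y)) ∂μ := by
    intro i hi
    rw [← integral_add (hint_star i (Or.inl hi)) (hint2 i hi)]
    apply integral_congr_ae
    filter_upwards [hae] with y hy
    rw [hy i]; ring
  have hLHS : ∑ i, ptil i * ∫ y, h i y * Real.log (h i y / (∑ j, ptil j * h j y)) ∂μ
      = (∑ i, ptil i * ∫ y, h i y * Real.log (h i y / (∑ j, pstar j * h j y)) ∂μ)
        + ∑ i, ptil i *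
            ∫ y, h i y * Real.log ((∑ j, pstar j * h j y) / (∑ j, ptil j * h j y)) ∂μ := by
    rw [← Finset.sum_add_distrib]
    refine Finset.sum_congr rfl fun i _ => ?_
    rcases eq_or_lt_of_le (hptil0 i) with h0 | hpos
    · simp [← h0]
    · rw [hsplit i hpos]; ring
  -- first sum equals lam + nu * Ẽ
  have h1 : ∑ i, ptil i * ∫ y, h i y * Real.log (h i y / (∑ j, pstar j * h j y)) ∂μ
      = lam + nu * ∑ i, ptil i * w i := by
    have hterm : ∀ i ∈ Finset.univ,
        ptil i * ∫ y, h i y * Real.log (h i y / (∑ j, pstar j * h j y)) ∂μ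
          = ptil i * lam + nu * (ptil i * w i) := by
      intro i _
      rcases eq_or_lt_of_le (hptil0 i) with h0 | hpos
      · simp [← h0]
      · have hps : 0 < pstar i := by
          rcases eq_or_lt_of_le (hpstar0 i) with h0' | h0'
          · exact absurd (hsupp i h0'.symm) hpos.ne'
          · exact h0'
        rw [hkkt i hps]; ring
    rw [Finset.sum_congr rfl hterm, Finset.sum_add_distrib, ← Finset.sum_mul,
      ← Finset.mul_sum, hptil1, one_mul]
  -- target: I* = lam + nu * E*
  have hstar : ∑ i, pstar i * ∫ y, h i y * Real.log (h i y / (∑ j, pstar j * h j y)) ∂μ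
      = lam + nu * ∑ i, pstar i * w i := by
    have hterm : ∀ i ∈ Finset.univ,
        pstar i * ∫ y, h i y * Real.log (h i y / (∑ j, pstar j * h j y)) ∂μ
          = pstar i * lam + nu * (pstar i * w i) := by
      intro i _
      rcases eq_or_lt_of_le (hpstar0 i) with h0 | hpos
      · simp [← h0]
      · rw [hkkt i hpos]; ring
    rw [Finset.sum_congr rfl hterm, Finset.sum_add_distrib, ← Finset.sum_mul,
      ← Finset.mul_sum, hpstar1, one_mul]
  -- cross sum equals minus the KL divergence
  have h2 : ∑ i, ptil i *
        ∫ y, h i y * Real.log ((∑ j, pstar j * h j y) / (∑ j, ptil j * h j y)) ∂μ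
      = - ∫ y, (∑ i, ptil i * h i y) *
            Real.log ((∑ i, ptil i * h i y) / (∑ i, pstar i * h i y)) ∂μ := by
    have hintg : ∀ i : Fin m, Integrable (fun y => ptil i * (h i y *
        Real.log ((∑ j, pstar j * h j y) / (∑ j, ptil j * h j y)))) μ := by
      intro i
      rcases eq_or_lt_of_le (hptil0 i) with h0 | hpos
      · have : (fun y => ptil i * (h i y *
            Real.log ((∑ j, pstar j * h j y) / (∑ j, ptil j * h j y)))) = fun _ => (0:ℝ) := by
          funext y; simp [← h0]
        rw [this]; exact integrable_zero _ _ _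
      · exact (hint2 i hpos).const_mul _
    have hswap : ∑ i, ptil i *
          ∫ y, h i y * Real.log ((∑ j, pstar j * h j y) / (∑ j, ptil j * h j y)) ∂μ
        = ∫ y, ∑ i, ptil i * (h i y *
            Real.log ((∑ j, pstar j * h j y) / (∑ j, ptil j * h j y))) ∂μ := by
      rw [integral_finset_sum _ fun i _ => hintg i]
      exact Finset.sum_congr rfl fun i _ => (integral_const_mul _ _).symm
    rw [hswap, ← integral_neg]
    apply integral_congr_ae
    filter_upwards [hqstar_pos, hqtil_pos] with y hs ht
    have : ∑ i, ptil i * (h i y *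
        Real.log ((∑ j, pstar j * h j y) / (∑ j, ptil j * h j y)))
        = (∑ i, ptil i * h i y) *
          Real.log ((∑ j, pstar j * h j y) / (∑ j, ptil j * h j y)) := by
      rw [Finset.sum_mul]
      exact Finset.sum_congr rfl fun i _ => (mul_assoc _ _ _).symm
    rw [this, Real.log_div hs.ne' ht.ne', Real.log_div ht.ne' hs.ne']
    ring
  rw [hLHS, h1, h2, hstar]
  ring
end

section
/- (Analytic core of Proposition 2.) Let C : ℝ → ℝ be strictly concave and differentiable at E* ∈ ℝ. Let (E_n), (I_n), (ε_n) be real sequences such that for all n: ε_n ≥ 0, I_n ≤ C(E_n), and I_n = C(E*) + C'(E*)(E_n − E*) − ε_n. If ε_n → 0 as n → ∞, then E_n → E* and I_n → C(E*). -/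
/-!
The gap `g x = C E* + C'(E*) (x - E*) - C x` between the tangent line of `C` at `E*` and `C`
is convex, vanishes at `E*` and is positive elsewhere by strict concavity. The hypotheses give
`0 ≤ g (E n) ≤ ε n`, so `g (E n) → 0`, and a convex function with a strict minimum only tends
to its minimum value along sequences converging to the minimiser.
-/

open Set Filter Topology

/-- A point at distance at least `δ` from a minimiser `x₀` of a convex `g` has `x₀ - δ` or
`x₀ + δ` on the segment joining it to `x₀`. -/
theorem ConvexOn.min_le_of_le_abs_sub {g : ℝ → ℝ} (hg : ConvexOn ℝ univ g) {x₀ x δ : ℝ}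
    (hmin : ∀ y, g x₀ ≤ g y) (hδ : 0 ≤ δ) (hx : δ ≤ |x - x₀|) :
    min (g (x₀ - δ)) (g (x₀ + δ)) ≤ g x := by
  have hseg : ∀ z ∈ segment ℝ x₀ x, g z ≤ g x := fun z hz =>
    (hg.le_on_segment (mem_univ _) (mem_univ _) hz).trans (max_le (hmin x) le_rfl)
  rw [segment_eq_uIcc] at hseg
  rcases le_total x₀ x with h | h
  · rw [abs_of_nonneg (sub_nonneg.mpr h)] at hx
    exact (min_le_right _ _).trans
      (hseg _ (mem_uIcc.mpr (Or.inl ⟨by linarith, by linarith⟩)))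
  · rw [abs_of_nonpos (sub_nonpos.mpr h)] at hx
    exact (min_le_left _ _).trans
      (hseg _ (mem_uIcc.mpr (Or.inr ⟨by linarith, by linarith⟩)))

theorem ConvexOn.tendsto_of_tendsto_comp_of_strictMin {g : ℝ → ℝ} (hg : ConvexOn ℝ univ g)
    {x₀ : ℝ} (hmin : ∀ x ≠ x₀, g x₀ < g x) {α : Type*} {l : Filter α} {u : α → ℝ}
    (hu : Tendsto (g ∘ u) l (𝓝 (g x₀))) : Tendsto u l (𝓝 x₀) := by
  have hmin' : ∀ y, g x₀ ≤ g y := fun y => by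
    rcases eq_or_ne y x₀ with rfl | hy
    exacts [le_rfl, (hmin y hy).le]
  refine Metric.tendsto_nhds.mpr fun δ hδ => ?_
  have hm : g x₀ < min (g (x₀ - δ)) (g (x₀ + δ)) :=
    lt_min (hmin _ (by linarith)) (hmin _ (by linarith))
  filter_upwards [hu.eventually (gt_mem_nhds hm)] with n hn
  rw [Real.dist_eq]
  by_contra! hfar
  exact (hg.min_le_of_le_abs_sub hmin' hδ.le hfar).not_gt hn

noncomputable def tangentGap (C : ℝ → ℝ) (x₀ x : ℝ) : ℝ :=
  C x₀ + deriv C x₀ * (x - x₀) - C x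

@[simp]
theorem tangentGap_self (C : ℝ → ℝ) (x₀ : ℝ) : tangentGap C x₀ x₀ = 0 := by
  simp [tangentGap]

theorem ConcaveOn.convexOn_tangentGap {C : ℝ → ℝ} (hC : ConcaveOn ℝ univ C) (x₀ : ℝ) :
    ConvexOn ℝ univ (tangentGap C x₀) := by
  have hline : ConvexOn ℝ univ fun x => deriv C x₀ * x + (C x₀ - deriv C x₀ * x₀) :=
    ((LinearMap.mul ℝ ℝ (deriv C x₀)).convexOn convex_univ).add_const _
  have hgap : tangentGap C x₀ = (fun x => deriv C x₀ * x + (C x₀ - deriv C x₀ * x₀)) - C := by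
    ext x
    simp only [tangentGap, Pi.sub_apply]
    ring
  exact hgap ▸ hline.sub hC

theorem StrictConcaveOn.tangentGap_pos {C : ℝ → ℝ} (hC : StrictConcaveOn ℝ univ C) {x₀ x : ℝ}
    (hd : DifferentiableAt ℝ C x₀) (hx : x ≠ x₀) : 0 < tangentGap C x₀ x := by
  unfold tangentGap
  rcases hx.lt_or_gt with h | h
  · have hslope := hC.deriv_lt_slope (mem_univ x) (mem_univ x₀) h hd
    rw [slope_def_field, lt_div_iff₀ (sub_pos.mpr h)] at hslope
    linarith
  · have hslope := hC.slope_lt_deriv (mem_univ x₀) (mem_univ x) h hd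
    rw [slope_def_field, div_lt_iff₀ (sub_pos.mpr h)] at hslope
    linarith

theorem StrictConcaveOn.tangentGap_nonneg {C : ℝ → ℝ} (hC : StrictConcaveOn ℝ univ C)
    {x₀ : ℝ} (hd : DifferentiableAt ℝ C x₀) (x : ℝ) : 0 ≤ tangentGap C x₀ x := by
  rcases eq_or_ne x x₀ with rfl | hx
  exacts [(tangentGap_self C x).ge, (hC.tangentGap_pos hd hx).le]

theorem operating_points_converge_general
    (C : ℝ → ℝ) (Estar : ℝ)
    (hconc : StrictConcaveOn ℝ Set.univ C)
    (hdiff : DifferentiableAt ℝ C Estar)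
    (E I ε : ℕ → ℝ)
    (hle : ∀ n, I n ≤ C (E n))
    (heq : ∀ n, I n = C Estar + deriv C Estar * (E n - Estar) - ε n)
    (hlim : Filter.Tendsto ε Filter.atTop (nhds 0)) :
    Filter.Tendsto E Filter.atTop (nhds Estar) ∧
      Filter.Tendsto I Filter.atTop (nhds (C Estar)) := by
  have hgap : ∀ n, tangentGap C Estar (E n) ≤ ε n := fun n => by
    unfold tangentGap
    linarith [hle n, heq n]
  have hgap_lim : Tendsto (tangentGap C Estar ∘ E) atTop (𝓝 (tangentGap C Estar Estar)) := by
    rw [tangentGap_self]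
    exact squeeze_zero (fun n => hconc.tangentGap_nonneg hdiff (E n)) hgap hlim
  have hE : Tendsto E atTop (𝓝 Estar) :=
    (hconc.concaveOn.convexOn_tangentGap Estar).tendsto_of_tendsto_comp_of_strictMin
      (fun x hx => by simpa using hconc.tangentGap_pos hdiff hx) hgap_lim
  refine ⟨hE, ?_⟩
  have hI : Tendsto (fun n => C Estar + deriv C Estar * (E n - Estar) - ε n) atTop
      (𝓝 (C Estar + deriv C Estar * (Estar - Estar) - 0)) :=
    ((hE.sub_const Estar).const_mul _).const_add _ |>.sub hlim
  rw [sub_self, mul_zero, add_zero, sub_zero] at hI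
  exact hI.congr fun n => (heq n).symm

/-- Analytic core of Proposition 2: let `C : ℝ → ℝ` be strictly concave
and differentiable at `E*`. If for all `n`: `ε n ≥ 0`, `I n ≤ C (E n)`, and
`I n = C E* + C' E* * (E n − E*) − ε n`, and `ε n → 0`, then `E n → E*` and
`I n → C E*`. -/
theorem operating_points_converge
    (C : ℝ → ℝ) (Estar : ℝ)
    (hconc : StrictConcaveOn ℝ Set.univ C)
    (hdiff : DifferentiableAt ℝ C Estar)
    (E I ε : ℕ → ℝ)
    (hε : ∀ n, 0 ≤ ε n)
    (hle : ∀ n, I n ≤ C (E n))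
    (heq : ∀ n, I n = C Estar + deriv C Estar * (E n - Estar) - ε n)
    (hlim : Filter.Tendsto ε Filter.atTop (nhds 0)) :
    Filter.Tendsto E Filter.atTop (nhds Estar) ∧
      Filter.Tendsto I Filter.atTop (nhds (C Estar)) :=
  operating_points_converge_general C Estar hconc hdiff E I ε hle heq hlim
end

section
/- Additivity of mutual information for a memoryless channel under product input PMFs: for a probability vector p ∈ ℝ^m and n ∈ ℕ, with joint conditional densities h_v(y) = Π_{k=1}^n h_{v_k}(y_k) on ℂ^n for v ∈ {1,…,m}^n, and joint output density q^{(n)}(y) = Π_{k=1}^n q_p(y_k), one has Σ_{v ∈ {1,…,m}^n} ( Π_{k=1}^n p_{v_k} ) ∫_{ℂ^n} h_v(y) log( h_v(y) / q^{(n)}(y) ) dμ^n(y) = n Σ_{i=1}^m p_i ∫_ℂ h_i(y) log( h_i(y) / q_p(y) ) dμ(y), where μ^n is the n-fold product of μ. -/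
/-!
As `log` of a product of nonzero factors is the sum of the logs, the block integrand
`h_v log (h_v / q⁽ⁿ⁾)` is a sum over `k` of products in which every factor except the `k`-th is a
density `h_{v_j}`; by Fubini the `k`-th term integrates to `I(v_k) = ∫ h_{v_k} log (h_{v_k} / q)`.
Under the weights `∏ₖ p_{v_k}` each coordinate `v_k` has law `p`, so averaging `∑ₖ I(v_k)` gives
`n ∑ᵢ pᵢ I(i)`.
-/

open MeasureTheory Real Finset Function

variable {ι : Type*} [Fintype ι] [DecidableEq ι]

theorem prod_update_apply_eq_mul {α : ι → Type*} {R : Type*} [CommMonoid R]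
    (f : ∀ i, α i → R) (k : ι) (g : α k → R) (y : ∀ i, α i) :
    ∏ j, update f k g j (y j) = g (y k) * ∏ j ∈ {k}ᶜ, f j (y j) := by
  rw [Fintype.prod_eq_mul_prod_compl k, update_self]
  congr 1
  refine prod_congr rfl fun j hj => ?_
  rw [update_of_ne (by simpa using hj)]

theorem sum_pi_prod_mul_apply {α : Type*} [Fintype α] {R : Type*} [CommSemiring R]
    {p : α → R} (hp : ∑ i, p i = 1) (f : α → R) (k : ι) :
    ∑ v : ι → α, (∏ j, p (v j)) * f (v k) = ∑ i, p i * f i := by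
  calc _ = ∑ v : ι → α, ∏ j, update (fun _ => p) k (fun i => p i * f i) j (v j) := by
        refine sum_congr rfl fun v _ => ?_
        rw [prod_update_apply_eq_mul, Fintype.prod_eq_mul_prod_compl k]
        ring
    _ = ∑ i, p i * f i := by
        rw [← Fintype.prod_sum, Fintype.prod_eq_single k fun j hj => by simp [update_of_ne hj, hp],
          update_self]

theorem sum_pi_prod_mul_sum_apply {α : Type*} [Fintype α] {R : Type*} [CommSemiring R]
    {p : α → R} (hp : ∑ i, p i = 1) (f : α → R) :
    ∑ v : ι → α, (∏ j, p (v j)) * ∑ k, f (v k) = Fintype.card ι * ∑ i, p i * f i := by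
  simp_rw [mul_sum]
  rw [sum_comm]
  simp_rw [sum_pi_prod_mul_apply hp f, sum_const, card_univ, nsmul_eq_mul, mul_sum]

theorem integral_pi_prod_update {𝕜 : Type*} [RCLike 𝕜] {α : ι → Type*}
    [∀ i, MeasurableSpace (α i)] {μ : ∀ i, Measure (α i)} [∀ i, SigmaFinite (μ i)]
    {f : ∀ i, α i → 𝕜} (hf : ∀ i, ∫ x, f i x ∂μ i = 1) (k : ι) (g : α k → 𝕜) :
    ∫ y, ∏ j, update f k g j (y j) ∂Measure.pi μ = ∫ x, g x ∂μ k := by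
  rw [integral_fintype_prod_eq_prod,
    Fintype.prod_eq_single k fun j hj => by simp only [update_of_ne hj, hf], update_self]

theorem prod_mul_log_prod_div_prod (a b : ι → ℝ) (hb : ∀ i, b i ≠ 0) :
    (∏ i, a i) * log ((∏ i, a i) / ∏ i, b i)
      = ∑ k, a k * log (a k / b k) * ∏ j ∈ {k}ᶜ, a j := by
  by_cases ha : ∀ i, a i ≠ 0
  · rw [← prod_div_distrib, log_prod fun i _ => div_ne_zero (ha i) (hb i), mul_sum]
    refine sum_congr rfl fun k _ => ?_
    rw [Fintype.prod_eq_mul_prod_compl k]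
    ring
  · obtain ⟨i, hi⟩ := not_forall_not.1 ha
    rw [prod_eq_zero (mem_univ i) hi, zero_mul]
    refine (sum_eq_zero fun k _ => ?_).symm
    rcases eq_or_ne k i with rfl | hki
    · simp [hi]
    · rw [prod_eq_zero (i := i) (by simp [hki.symm]) hi, mul_zero]

theorem MeasureTheory.Integrable.mul_log_div {α : Type*} [MeasurableSpace α] {μ : Measure α}
    {f q : α → ℝ}
    (hf : Integrable (fun x => f x * log (f x)) μ) (hfq : Integrable (fun x => f x * log (q x)) μ)
    (hq : ∀ᵐ x ∂μ, q x ≠ 0) : Integrable (fun x => f x * log (f x / q x)) μ := by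
  refine (hf.sub hfq).congr (hq.mono fun x hx => ?_)
  rcases eq_or_ne (f x) 0 with h0 | h0
  · simp [h0]
  · simp [log_div h0 hx, mul_sub]

theorem integral_prod_mul_log_prod_div_prod {α : ι → Type*} [∀ i, MeasurableSpace (α i)]
    {μ : ∀ i, Measure (α i)} [∀ i, SigmaFinite (μ i)] {f q : ∀ i, α i → ℝ}
    (hf : ∀ i, ∫ x, f i x ∂μ i = 1)
    (hfq : ∀ i, Integrable (fun x => f i x * log (f i x / q i x)) (μ i))
    (hq : ∀ i, ∀ᵐ x ∂μ i, q i x ≠ 0) :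
    ∫ y, (∏ i, f i (y i)) * log ((∏ i, f i (y i)) / ∏ i, q i (y i)) ∂Measure.pi μ
      = ∑ i, ∫ x, f i x * log (f i x / q i x) ∂μ i := by
  set g : ∀ i, α i → ℝ := fun i x => f i x * log (f i x / q i x)
  have hq_pi : ∀ᵐ y ∂Measure.pi μ, ∀ i, q i (y i) ≠ 0 :=
    ae_all_iff.2 fun i => Measure.tendsto_eval_ae_ae.eventually (hq i)
  have hf_int : ∀ i, Integrable (f i) (μ i) := fun i => .of_integral_ne_zero (by simp [hf])
  calc _ = ∫ y, ∑ k, ∏ j, update f k (g k) j (y j) ∂Measure.pi μ := by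
        refine integral_congr_ae (hq_pi.mono fun y hy => ?_)
        simp only [prod_mul_log_prod_div_prod _ _ hy, prod_update_apply_eq_mul, g]
    _ = ∑ k, ∫ y, ∏ j, update f k (g k) j (y j) ∂Measure.pi μ := by
        refine integral_finsetSum _ fun k _ => Integrable.fintype_prod_dep fun j => ?_
        rcases eq_or_ne j k with rfl | hjk
        · simpa using hfq j
        · simpa [update_of_ne hjk] using hf_int j
    _ = _ := sum_congr rfl fun k _ => integral_pi_prod_update hf k (g k)

theorem product_pmf_mutual_information_additive_general
    (μ : Measure ℂ) [SigmaFinite μ] (m n : ℕ) (h : Fin m → ℂ → ℝ)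
    (hdens : ∀ i, ∫ y, h i y ∂μ = 1)
    (p : Fin m → ℝ) (hp0 : ∀ i, 0 ≤ p i) (hp1 : (∑ i, p i) = 1)
    (hq_pos : ∀ᵐ y ∂μ, 0 < ∑ i, p i * h i y)
    (hint_hh : ∀ i, 0 < p i → Integrable (fun y => h i y * Real.log (h i y)) μ)
    (hint_hq : ∀ i, 0 < p i →
      Integrable (fun y => h i y * Real.log (∑ j, p j * h j y)) μ) :
    ∑ v : Fin n → Fin m, (∏ k, p (v k)) *
        ∫ y : Fin n → ℂ,
          (∏ k, h (v k) (y k)) *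
            Real.log ((∏ k, h (v k) (y k)) / ∏ k, (∑ i, p i * h i (y k)))
          ∂(Measure.pi fun _ : Fin n => μ)
      = n * ∑ i, p i * ∫ y, h i y * Real.log (h i y / (∑ j, p j * h j y)) ∂μ := by
  set q : ℂ → ℝ := fun y => ∑ j, p j * h j y
  have hq : ∀ᵐ y ∂μ, q y ≠ 0 := hq_pos.mono fun y hy => hy.ne'
  set I : Fin m → ℝ := fun i => ∫ y, h i y * log (h i y / q y) ∂μ
  calc _ = ∑ v : Fin n → Fin m, (∏ k, p (v k)) * ∑ k, I (v k) := by
        refine sum_congr rfl fun v _ => ?_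
        by_cases hv : ∀ k, 0 < p (v k)
        · rw [integral_prod_mul_log_prod_div_prod (μ := fun _ => μ) (f := fun k => h (v k))
            (q := fun _ => q) (fun k => hdens (v k))
            (fun k => (hint_hh _ (hv k)).mul_log_div (hint_hq _ (hv k)) hq) fun _ => hq]
        · obtain ⟨k, hk⟩ := not_forall.1 hv
          rw [prod_eq_zero (mem_univ k) ((hp0 _).eq_or_lt.resolve_right hk).symm, zero_mul,
            zero_mul]
    _ = _ := by rw [sum_pi_prod_mul_sum_apply hp1 I, Fintype.card_fin]

/-- Additivity of mutual information for a memoryless channel under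
product input PMFs: with joint conditional densities `h_v(y) = ∏ k, h (v k) (y k)` and
joint output density `q⁽ⁿ⁾(y) = ∏ k, q_p (y k)`, the block mutual information equals
`n` times the single-letter mutual information. -/
theorem product_pmf_mutual_information_additive
    (μ : Measure ℂ) [SigmaFinite μ] (m n : ℕ) (h : Fin m → ℂ → ℝ)
    (hmeas : ∀ i, Measurable (h i))
    (hnonneg : ∀ i y, 0 ≤ h i y)
    (hdens : ∀ i, ∫ y, h i y ∂μ = 1)
    (p : Fin m → ℝ) (hp0 : ∀ i, 0 ≤ p i) (hp1 : (∑ i, p i) = 1)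
    (hq_pos : ∀ᵐ y ∂μ, 0 < ∑ i, p i * h i y)
    (hint_hh : ∀ i, 0 < p i → Integrable (fun y => h i y * Real.log (h i y)) μ)
    (hint_hq : ∀ i, 0 < p i →
      Integrable (fun y => h i y * Real.log (∑ j, p j * h j y)) μ) :
    ∑ v : Fin n → Fin m, (∏ k, p (v k)) *
        ∫ y : Fin n → ℂ,
          (∏ k, h (v k) (y k)) *
            Real.log ((∏ k, h (v k) (y k)) / ∏ k, (∑ i, p i * h i (y k)))
          ∂(Measure.pi fun _ : Fin n => μ)
      = n * ∑ i, p i * ∫ y, h i y * Real.log (h i y / (∑ j, p j * h j y)) ∂μ :=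
  product_pmf_mutual_information_additive_general μ m n h hdens p hp0 hp1 hq_pos hint_hh hint_hq
end

section
/- Partial derivative of the mutual information functional: fix i ∈ {1,…,m} and a probability vector p ∈ ℝ^m, and for t in a neighborhood of 0 define F(t) = −∫_ℂ (q_p(y) + t h_i(y)) log( q_p(y) + t h_i(y) ) dμ(y) + t ∫_ℂ h_i(y) log h_i(y) dμ(y) + Σ_{j=1}^m p_j ∫_ℂ h_j(y) log h_j(y) dμ(y). Then F is differentiable at t = 0 with F'(0) = ∫_ℂ h_i(y) log( h_i(y) / q_p(y) ) dμ(y) − 1. -/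
/-!
Writing `q = ∑ j, p j * h j` and `a = h i`, the entropy term is `t ↦ ∫ φ (q + t a) dμ` with
`φ x = x log x`, whose `t`-derivative is `a (1 + log (q + t a))`. The domination hypothesis makes
this derivative integrably bounded, so one may differentiate under the integral sign; the
remaining terms are linear in `t`, and `∫ a (1 + log q) = 1 + ∫ a log q` since `a` is a density.

The domination is only given for each `t` separately, outside a `t`-dependent null set. Taking
rational `t` gives a single null set, and the bound extends to every `t` of the interval because
near a zero of `q + t a` the logarithm, hence the derivative, is unbounded.
-/

open MeasureTheory Set Real

theorem hasDerivAt_add_mul_mul_log {q a t : ℝ} (ht : q + t * a ≠ 0) :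
    HasDerivAt (fun s => (q + s * a) * log (q + s * a)) (a * (1 + log (q + t * a))) t := by
  have := (hasDerivAt_mul_log ht).comp t (((hasDerivAt_id t).mul_const a).const_add q)
  exact this.congr_deriv (by ring)

theorem ContinuousOn.forall_le_of_forall_ratCast_le {U : Set ℝ} (hU : IsOpen U) {f : ℝ → ℝ}
    (hf : ContinuousOn f U) {G : ℝ} (hG : ∀ r : ℚ, (r : ℝ) ∈ U → f r ≤ G) :
    ∀ t ∈ U, f t ≤ G := by
  intro t ht
  by_contra! hlt
  obtain ⟨r, hrU, hr⟩ := Rat.denseRange_cast.exists_mem_open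
    (hf.isOpen_inter_preimage hU isOpen_Ioi) ⟨t, ht, hlt⟩
  exact (hG r hrU).not_gt hr

theorem add_mul_pos_and_abs_le_of_forall_ratCast {q a G ε : ℝ} (hq : 0 < q)
    (hG : ∀ r : ℚ, |(r : ℝ)| < ε → |a * (1 + log (q + r * a))| ≤ G) :
    ∀ t ∈ Metric.ball (0 : ℝ) ε, 0 < q + t * a ∧ |a * (1 + log (q + t * a))| ≤ G := by
  set U := Metric.ball (0 : ℝ) ε ∩ {s | 0 < q + s * a}
  have hU : IsOpen U := Metric.isOpen_ball.inter (isOpen_lt continuous_const (by fun_prop))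
  have hbound : ∀ s ∈ U, |a * (1 + log (q + s * a))| ≤ G := by
    refine ContinuousOn.forall_le_of_forall_ratCast_le hU (fun s hs => ?_)
      fun r hr => hG r (by simpa [← Real.norm_eq_abs] using hr.1)
    have hlog : ContinuousAt (fun s => log (q + s * a)) s :=
      ((continuous_const.add (continuous_id.mul continuous_const)).continuousAt).log hs.2.ne'
    exact (continuousAt_const.mul (continuousAt_const.add hlog)).abs.continuousWithinAt
  suffices Metric.ball 0 ε ⊆ U from fun t ht => ⟨(this ht).2, hbound t (this ht)⟩
  intro t ht
  by_contra htU
  have ht_nonpos : q + t * a ≤ 0 := by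
    by_contra! h
    exact htU ⟨ht, h⟩
  have ha : 0 < |a| := abs_pos.2 fun ha => by simp [ha] at ht_nonpos; linarith
  set c := exp (-1 - G / |a|)
  have hc_le : ∀ s ∈ U, c ≤ q + s * a := by
    intro s hs
    rw [← le_log_iff_exp_le hs.2]
    have h1 : |1 + log (q + s * a)| ≤ G / |a| := by
      rw [le_div_iff₀' ha, ← abs_mul]
      exact hbound s hs
    linarith [neg_abs_le (1 + log (q + s * a))]
  have hεpos : 0 < ε := (abs_nonneg t).trans_lt (by simpa using ht)
  have hcq : c ≤ q := by simpa using hc_le 0 ⟨Metric.mem_ball_self hεpos, by simpa using hq⟩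
  have hc : 0 < c := exp_pos _
  obtain ⟨s, hs, hsc⟩ : ∃ s ∈ uIcc 0 t, q + s * a = c / 2 :=
    intermediate_value_uIcc (f := fun s => q + s * a) (by fun_prop)
      (mem_uIcc.2 (Or.inr ⟨by linarith, by rw [zero_mul, add_zero]; linarith⟩))
  have hs_ball : s ∈ Metric.ball (0 : ℝ) ε := by
    rw [Real.ball_eq_Ioo] at ht ⊢
    exact ordConnected_Ioo.uIcc_subset (by simp [hεpos]) ht hs
  linarith [hc_le s ⟨hs_ball, show 0 < q + s * a by rw [hsc]; positivity⟩]

theorem lipschitzOnWith_add_mul_mul_log {q a G ε : ℝ} (hq : 0 < q)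
    (hG : ∀ r : ℚ, |(r : ℝ)| < ε → |a * (1 + log (q + r * a))| ≤ G) :
    LipschitzOnWith (nnabs G) (fun t => (q + t * a) * log (q + t * a)) (Metric.ball 0 ε) := by
  have hball := add_mul_pos_and_abs_le_of_forall_ratCast hq hG
  refine (convex_ball 0 ε).lipschitzOnWith_of_nnnorm_hasDerivWithin_le
    (fun t ht => (hasDerivAt_add_mul_mul_log (hball t ht).1.ne').hasDerivWithinAt) fun t ht => ?_
  rw [← NNReal.coe_le_coe, coe_nnnorm, Real.norm_eq_abs, Real.coe_nnabs]
  exact (hball t ht).2.trans (le_abs_self G)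

section Integral

variable {α : Type*} [MeasurableSpace α] {μ : Measure α}

theorem hasDerivAt_integral_add_mul_mul_log {q a g : α → ℝ} (hq : Measurable q)
    (ha : Measurable a) (hq_pos : ∀ᵐ y ∂μ, 0 < q y)
    (hint : Integrable (fun y => q y * log (q y)) μ) {ε : ℝ} (hε : 0 < ε) (hg : Integrable g μ)
    (hdom : ∀ t : ℝ, |t| < ε → ∀ᵐ y ∂μ, |a y * (1 + log (q y + t * a y))| ≤ g y) :
    HasDerivAt (fun t : ℝ => ∫ y, (q y + t * a y) * log (q y + t * a y) ∂μ)
      (∫ y, a y * (1 + log (q y)) ∂μ) 0 := by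
  have hdom_rat : ∀ᵐ y ∂μ, ∀ r : ℚ, |(r : ℝ)| < ε →
      |a y * (1 + log (q y + r * a y))| ≤ g y :=
    ae_all_iff.2 fun r => Filter.eventually_imp_distrib_left.2 (hdom r)
  have hlip : ∀ᵐ y ∂μ, LipschitzOnWith (nnabs (g y))
      (fun t => (q y + t * a y) * log (q y + t * a y)) (Metric.ball 0 ε) := by
    filter_upwards [hq_pos, hdom_rat] with y hy hr using lipschitzOnWith_add_mul_mul_log hy hr
  have hderiv : ∀ᵐ y ∂μ, HasDerivAt (fun t => (q y + t * a y) * log (q y + t * a y))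
      (a y * (1 + log (q y))) 0 := by
    filter_upwards [hq_pos] with y hy
    simpa using hasDerivAt_add_mul_mul_log (q := q y) (a := a y) (t := 0) (by simpa using hy.ne')
  refine (hasDerivAt_integral_of_dominated_loc_of_lip (Metric.ball_mem_nhds 0 hε)
    (Filter.Eventually.of_forall fun t => ?_) (by simpa using hint) ?_ hlip hg hderiv).2
  · exact ((hq.add (ha.const_mul t)).mul (hq.add (ha.const_mul t)).log).aestronglyMeasurable
  · exact (ha.mul (measurable_const.add hq.log)).aestronglyMeasurable

theorem integral_mul_log_div {f q : α → ℝ} (hq : ∀ᵐ y ∂μ, q y ≠ 0)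
    (hf : Integrable (fun y => f y * log (f y)) μ) (hfq : Integrable (fun y => f y * log (q y)) μ) :
    ∫ y, f y * log (f y / q y) ∂μ = ∫ y, f y * log (f y) ∂μ - ∫ y, f y * log (q y) ∂μ := by
  rw [← integral_sub hf hfq]
  refine integral_congr_ae ?_
  filter_upwards [hq] with y hy
  rcases eq_or_ne (f y) 0 with h0 | h0
  · simp [h0]
  · simp only [log_div h0 hy, mul_sub]

end Integral

theorem mutual_information_partial_derivative_general
    (μ : Measure ℂ) (m : ℕ) (h : Fin m → ℂ → ℝ)
    (hmeas : ∀ i, Measurable (h i))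
    (hdens : ∀ i, ∫ y, h i y ∂μ = 1)
    (i : Fin m) (p : Fin m → ℝ)
    (hq_pos : ∀ᵐ y ∂μ, 0 < ∑ j, p j * h j y)
    (hint_q : Integrable (fun y => (∑ j, p j * h j y) * Real.log (∑ j, p j * h j y)) μ)
    (hint_hh : Integrable (fun y => h i y * Real.log (h i y)) μ)
    (hint_hq : Integrable (fun y => h i y * Real.log (∑ j, p j * h j y)) μ)
    (hdom : ∃ ε > (0 : ℝ), ∃ g : ℂ → ℝ, Integrable g μ ∧
      ∀ t : ℝ, |t| < ε → ∀ᵐ y ∂μ,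
        |h i y * (1 + Real.log ((∑ j, p j * h j y) + t * h i y))| ≤ g y) :
    HasDerivAt
      (fun t : ℝ =>
        -∫ y, ((∑ j, p j * h j y) + t * h i y) *
            Real.log ((∑ j, p j * h j y) + t * h i y) ∂μ
          + t * ∫ y, h i y * Real.log (h i y) ∂μ
          + ∑ j, p j * ∫ y, h j y * Real.log (h j y) ∂μ)
      ((∫ y, h i y * Real.log (h i y / (∑ j, p j * h j y)) ∂μ) - 1) 0 := by
  obtain ⟨ε, hε, g, hg, hg_dom⟩ := hdom
  have hq_meas : Measurable fun y => ∑ j, p j * h j y :=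
    Finset.measurable_sum _ fun j _ => (hmeas j).const_mul (p j)
  have hentropy :=
    hasDerivAt_integral_add_mul_mul_log hq_meas (hmeas i) hq_pos hint_q hε hg hg_dom
  have hint_h : Integrable (h i) μ := Integrable.of_integral_ne_zero (by simp [hdens i])
  have hcross : ∫ y, h i y * (1 + log (∑ j, p j * h j y)) ∂μ
      = 1 + ∫ y, h i y * log (∑ j, p j * h j y) ∂μ := by
    simp only [mul_one_add]
    rw [integral_add hint_h hint_hq, hdens i]
  rw [integral_mul_log_div (hq_pos.mono fun y hy => hy.ne') hint_hh hint_hq]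
  refine ((hentropy.neg.add (hasDerivAt_mul_const _)).add_const _).congr_deriv ?_
  rw [hcross]
  ring

/-- Partial derivative of the mutual information functional: the function
`F(t) = −∫ (q_p + t h_i) log (q_p + t h_i) dμ + t ∫ h_i log h_i dμ + ∑ j, p j ∫ h_j log h_j dμ`
is differentiable at `t = 0` with `F'(0) = ∫ h_i log (h_i / q_p) dμ − 1`. -/
theorem mutual_information_partial_derivative
    (μ : Measure ℂ) [SigmaFinite μ] (m : ℕ) (h : Fin m → ℂ → ℝ)
    (hmeas : ∀ i, Measurable (h i))
    (hnonneg : ∀ i y, 0 ≤ h i y)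
    (hdens : ∀ i, ∫ y, h i y ∂μ = 1)
    (i : Fin m) (p : Fin m → ℝ)
    (hp0 : ∀ j, 0 ≤ p j) (hp1 : (∑ j, p j) = 1)
    (hq_pos : ∀ᵐ y ∂μ, 0 < ∑ j, p j * h j y)
    (hint_q : Integrable (fun y => (∑ j, p j * h j y) * Real.log (∑ j, p j * h j y)) μ)
    (hint_hh : Integrable (fun y => h i y * Real.log (h i y)) μ)
    (hint_hq : Integrable (fun y => h i y * Real.log (∑ j, p j * h j y)) μ)
    (hdom : ∃ ε > (0 : ℝ), ∃ g : ℂ → ℝ, Integrable g μ ∧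
      ∀ t : ℝ, |t| < ε → ∀ᵐ y ∂μ,
        |h i y * (1 + Real.log ((∑ j, p j * h j y) + t * h i y))| ≤ g y) :
    HasDerivAt
      (fun t : ℝ =>
        -∫ y, ((∑ j, p j * h j y) + t * h i y) *
            Real.log ((∑ j, p j * h j y) + t * h i y) ∂μ
          + t * ∫ y, h i y * Real.log (h i y) ∂μ
          + ∑ j, p j * ∫ y, h j y * Real.log (h j y) ∂μ)
      ((∫ y, h i y * Real.log (h i y / (∑ j, p j * h j y)) ∂μ) - 1) 0 :=
  mutual_information_partial_derivative_general μ m h hmeas hdens i p hq_pos hint_q hint_hh hint_hq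
    hdom
end
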